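/- arXiv:2003.13605 — 6 statements merged into one kernel-verified Lean document; each statement's English description precedes it below -/
import Mathlib

section
/- Let G = (V,E) be a finite simple graph on V = {1,…,n} with n ≥ 1, and for 0 ≤ k ≤ n let z^E_k(G) = z^E_{J_k}(G) where J_k = { I ⊆ V : |I| = k }. Then ϑ(G) = z^E_0(G) = z^E_1(G), z^E_{k-1}(G) ≥ z^E_k(G) for all 1 ≤ k ≤ n, and z^E_n(G) = α(G), where ϑ(G) denotes the optimal value of the semidefinite program sup{ 1ᵀx : (x,X) ∈ TH²(G) }. -/
open Matrix

noncomputable section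

/-- A stable set vector of a graph `G`: a 0/1 vector with `s i * s j = 0` on edges. -/
def IsStableVec {V : Type*} (G : SimpleGraph V) (s : V → ℝ) : Prop :=
  (∀ i, s i = 0 ∨ s i = 1) ∧ ∀ i j, G.Adj i j → s i * s j = 0

/-- The squared stable set polytope `STAB²(G) = conv{ s sᵀ : s ∈ S(G) }`. -/
def stab2 {V : Type*} (G : SimpleGraph V) : Set (Matrix V V ℝ) :=
  convexHull ℝ { M | ∃ s, IsStableVec G s ∧ M = Matrix.vecMulVec s s }

/-- The scaled squared stable set polytope
`SSTAB²(G) = conv({ (1/(sᵀs)) s sᵀ : s ∈ S(G), s ≠ 0 } ∪ {0})`. -/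
def sstab2 {V : Type*} [Fintype V] (G : SimpleGraph V) : Set (Matrix V V ℝ) :=
  convexHull ℝ
    ({ M | ∃ s, IsStableVec G s ∧ s ≠ 0 ∧
        M = (∑ k, s k * s k)⁻¹ • Matrix.vecMulVec s s } ∪ {(0 : Matrix V V ℝ)})

/-- The feasible region `TH²(G)` of the SDP (Tn+1): pairs `(x, X)` with `X` symmetric,
`diag X = x`, `X i j = 0` on edges and `X - x xᵀ` positive semidefinite. -/
def th2 {n : ℕ} (G : SimpleGraph (Fin n)) :
    Set ((Fin n → ℝ) × Matrix (Fin n) (Fin n) ℝ) :=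
  { p | p.2.IsSymm ∧ (∀ i, p.2 i i = p.1 i) ∧
      (∀ i j, G.Adj i j → p.2 i j = 0) ∧ (p.2 - Matrix.vecMulVec p.1 p.1).PosSemidef }

/-- The feasible region `CTH²(G)` of the SDP (Tn): symmetric PSD matrices with trace 1
vanishing on edges. -/
def cth2 {n : ℕ} (G : SimpleGraph (Fin n)) : Set (Matrix (Fin n) (Fin n) ℝ) :=
  { X | X.IsSymm ∧ X.trace = 1 ∧ (∀ i j, G.Adj i j → X i j = 0) ∧ X.PosSemidef }

/-- The principal submatrix `X_I` of `X` indexed by `I`. -/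
def subMat {n : ℕ} (X : Matrix (Fin n) (Fin n) ℝ) (I : Finset (Fin n)) :
    Matrix (I : Set (Fin n)) (I : Set (Fin n)) ℝ :=
  X.submatrix Subtype.val Subtype.val

/-- The exact subgraph constraint (ESC) for the subgraph of `G` induced by `I`. -/
def escFeas {n : ℕ} (G : SimpleGraph (Fin n)) (X : Matrix (Fin n) (Fin n) ℝ)
    (I : Finset (Fin n)) : Prop :=
  subMat X I ∈ stab2 (G.induce (I : Set (Fin n)))

/-- The scaled exact subgraph constraint (SESC) for the subgraph of `G` induced by `I`. -/
def sescFeas {n : ℕ} (G : SimpleGraph (Fin n)) (X : Matrix (Fin n) (Fin n) ℝ)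
    (I : Finset (Fin n)) : Prop :=
  subMat X I ∈ sstab2 (G.induce (I : Set (Fin n)))

/-- `z^E_J(G)`: optimal value of (Tn+1) with the ESCs for all `I ∈ J`. -/
def zE {n : ℕ} (G : SimpleGraph (Fin n)) (J : Set (Finset (Fin n))) : ℝ :=
  sSup { r | ∃ x X, (x, X) ∈ th2 G ∧ (∀ I ∈ J, escFeas G X I) ∧ r = ∑ i, x i }

/-- `z^C_J(G)`: optimal value of (Tn) with the ESCs for all `I ∈ J`. -/
def zC {n : ℕ} (G : SimpleGraph (Fin n)) (J : Set (Finset (Fin n))) : ℝ :=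
  sSup { r | ∃ X, X ∈ cth2 G ∧ (∀ I ∈ J, escFeas G X I) ∧ r = ∑ i, ∑ j, X i j }

/-- `z^S_J(G)`: optimal value of (Tn) with the SESCs for all `I ∈ J`. -/
def zS {n : ℕ} (G : SimpleGraph (Fin n)) (J : Set (Finset (Fin n))) : ℝ :=
  sSup { r | ∃ X, X ∈ cth2 G ∧ (∀ I ∈ J, sescFeas G X I) ∧ r = ∑ i, ∑ j, X i j }

/-- The collection `J_k` of all vertex subsets of cardinality `k`. -/
def Jk (n k : ℕ) : Set (Finset (Fin n)) := { I | I.card = k }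

/-!
For `|I| ≤ 1` the exact subgraph constraints are already implied by `TH²(G)`: the `1 × 1` block
of `X` at `i` is `x_i`, and `x_i = X_ii ≥ x_i²` puts it in `[0, 1]`, which is `STAB²` of a single
vertex. Since stable sets restrict along graph homomorphisms, so does `STAB²`; hence an
ESC for `I` implies those for all subsets of `I`, and the levels decrease. Finally the ESC for
`I = V` puts `X` itself in `STAB²(G)`, where the trace is at most `α(G)`, while `(s, s sᵀ)` for
a maximum stable set `s` is feasible at every level.
-/

namespace IsStableVec

variable {V W : Type*} {G : SimpleGraph V} {s : V → ℝ}

lemma zero (G : SimpleGraph V) : IsStableVec G 0 :=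
  ⟨fun _ => Or.inl rfl, fun _ _ _ => zero_mul 0⟩

lemma one_of_subsingleton [Subsingleton V] (G : SimpleGraph V) : IsStableVec G 1 :=
  ⟨fun _ => Or.inr rfl, fun i j hij => absurd (Subsingleton.elim i j ▸ hij) (G.irrefl)⟩

lemma comp (hs : IsStableVec G s) {H : SimpleGraph W} (f : H →g G) : IsStableVec H (s ∘ f) :=
  ⟨fun _ => hs.1 _, fun _ _ hij => hs.2 _ _ (f.map_adj hij)⟩

lemma mul_self (hs : IsStableVec G s) (i : V) : s i * s i = s i := by
  rcases hs.1 i with h | h <;> simp [h]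

end IsStableVec

section Stab2

variable {V W : Type*} {G : SimpleGraph V} {M : Matrix V V ℝ}

lemma vecMulVec_mem_stab2 {s : V → ℝ} (hs : IsStableVec G s) : vecMulVec s s ∈ stab2 G :=
  subset_convexHull ℝ _ ⟨s, hs, rfl⟩

lemma zero_mem_stab2 (G : SimpleGraph V) : (0 : Matrix V V ℝ) ∈ stab2 G := by
  simpa using vecMulVec_mem_stab2 (IsStableVec.zero G)

lemma smul_mem_stab2 (hM : M ∈ stab2 G) {t : ℝ} (ht : t ∈ Set.Icc 0 1) : t • M ∈ stab2 G :=
  (convex_convexHull ℝ _).smul_mem_of_zero_mem (zero_mem_stab2 G) hM ht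

lemma mem_stab2_of_isEmpty [IsEmpty V] (G : SimpleGraph V) (M : Matrix V V ℝ) :
    M ∈ stab2 G :=
  Subsingleton.elim (0 : Matrix V V ℝ) M ▸ zero_mem_stab2 G

lemma submatrix_mem_stab2 {H : SimpleGraph W} (f : H →g G) (hM : M ∈ stab2 G) :
    M.submatrix f f ∈ stab2 H := by
  have hconv : Convex ℝ ((fun N : Matrix V V ℝ => N.submatrix f f) ⁻¹' stab2 H) :=
    (convex_convexHull ℝ _).is_linear_preimage ⟨fun _ _ => rfl, fun _ _ => rfl⟩
  refine convexHull_min ?_ hconv hM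
  rintro _ ⟨s, hs, rfl⟩
  exact vecMulVec_mem_stab2 (hs.comp f)

lemma trace_le_of_mem_stab2 [Fintype V] {a : ℝ}
    (ha : ∀ s, IsStableVec G s → ∑ i, s i ≤ a) (hM : M ∈ stab2 G) : M.trace ≤ a := by
  refine convexHull_min ?_ (convex_halfSpace_le (traceLinearMap V ℝ ℝ).isLinear a) hM
  rintro _ ⟨s, hs, rfl⟩
  simpa [trace, vecMulVec_apply, hs.mul_self] using ha s hs

end Stab2

section ExactSubgraphHierarchy

variable {n : ℕ} {G : SimpleGraph (Fin n)} {x : Fin n → ℝ} {X : Matrix (Fin n) (Fin n) ℝ}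

lemma diag_eq_of_mem_th2 (h : (x, X) ∈ th2 G) (i : Fin n) : X i i = x i :=
  h.2.1 i

lemma mem_Icc_of_mem_th2 (h : (x, X) ∈ th2 G) (i : Fin n) : x i ∈ Set.Icc 0 1 := by
  have hdiag := h.2.2.2.diag_nonneg (i := i)
  simp only [Matrix.sub_apply, vecMulVec_apply, diag_eq_of_mem_th2 h i] at hdiag
  constructor <;> nlinarith

lemma vecMulVec_mem_th2 {s : Fin n → ℝ} (hs : IsStableVec G s) : (s, vecMulVec s s) ∈ th2 G :=
  ⟨by ext i j; simp [vecMulVec_apply, mul_comm], fun i => by simp [vecMulVec_apply, hs.mul_self],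
    hs.2, by simpa using PosSemidef.zero⟩

lemma trace_eq_sum_of_mem_th2 (h : (x, X) ∈ th2 G) : X.trace = ∑ i, x i :=
  Finset.sum_congr rfl fun i _ => diag_eq_of_mem_th2 h i

lemma escFeas_of_subset {I I' : Finset (Fin n)} (hII' : I ⊆ I') (h : escFeas G X I') :
    escFeas G X I :=
  submatrix_mem_stab2 (G.induceHomOfLE (Finset.coe_subset.mpr hII')).toHom h

lemma escFeas_vecMulVec {s : Fin n → ℝ} (hs : IsStableVec G s) (I : Finset (Fin n)) :
    escFeas G (vecMulVec s s) I :=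
  submatrix_mem_stab2 (SimpleGraph.Embedding.induce _).toHom (vecMulVec_mem_stab2 hs)

lemma escFeas_of_card_eq_zero {I : Finset (Fin n)} (hI : I.card = 0) : escFeas G X I := by
  obtain rfl := Finset.card_eq_zero.mp hI
  have : IsEmpty ((∅ : Finset (Fin n)) : Set (Fin n)) := by simp
  exact mem_stab2_of_isEmpty _ _

lemma escFeas_of_card_eq_one (h : (x, X) ∈ th2 G) {I : Finset (Fin n)} (hI : I.card = 1) :
    escFeas G X I := by
  obtain ⟨i, rfl⟩ := Finset.card_eq_one.mp hI
  have hsub : subMat X {i} = x i • vecMulVec 1 1 := by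
    ext ⟨j, hj⟩ ⟨k, hk⟩
    obtain rfl : j = i := by simpa using hj
    obtain rfl : k = j := by simpa using hk
    simp [subMat, diag_eq_of_mem_th2 h]
  have : Subsingleton (({i} : Finset (Fin n)) : Set (Fin n)) := by simp
  rw [escFeas, hsub]
  exact smul_mem_stab2 (vecMulVec_mem_stab2 (IsStableVec.one_of_subsingleton _))
    (mem_Icc_of_mem_th2 h i)

lemma mem_stab2_of_escFeas_univ (h : escFeas G X Finset.univ) : X ∈ stab2 G :=
  submatrix_mem_stab2
    (⟨fun i => ⟨i, Finset.mem_coe.mpr (Finset.mem_univ i)⟩, id⟩ :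
      G →g G.induce (Finset.univ : Finset (Fin n))) h

lemma bddAbove_zE (G : SimpleGraph (Fin n)) (J : Set (Finset (Fin n))) :
    BddAbove { r | ∃ x X, (x, X) ∈ th2 G ∧ (∀ I ∈ J, escFeas G X I) ∧ r = ∑ i, x i } := by
  refine ⟨n, ?_⟩
  rintro _ ⟨x, X, h, -, rfl⟩
  calc ∑ i, x i ≤ ∑ _i : Fin n, (1 : ℝ) :=
        Finset.sum_le_sum fun i _ => (mem_Icc_of_mem_th2 h i).2
    _ = n := by simp

lemma le_zE {J : Set (Finset (Fin n))} (h : (x, X) ∈ th2 G) (hJ : ∀ I ∈ J, escFeas G X I) :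
    ∑ i, x i ≤ zE G J :=
  le_csSup (bddAbove_zE G J) ⟨x, X, h, hJ, rfl⟩

lemma zE_le {J : Set (Finset (Fin n))} {a : ℝ}
    (ha : ∀ x X, (x, X) ∈ th2 G → (∀ I ∈ J, escFeas G X I) → ∑ i, x i ≤ a) : zE G J ≤ a :=
  csSup_le ⟨_, 0, 0, by simpa using vecMulVec_mem_th2 (IsStableVec.zero G),
      fun I _ => by simpa using escFeas_vecMulVec (IsStableVec.zero G) I, rfl⟩
    fun _ ⟨x, X, h, hJ, hr⟩ => hr ▸ ha x X h hJ

lemma zE_le_zE_of_forall_exists_superset {J J' : Set (Finset (Fin n))} (hJ : ∀ I ∈ J, ∃ I' ∈ J', I ⊆ I') :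
    zE G J' ≤ zE G J :=
  zE_le fun _ _ h hJ' => le_zE h fun I hI =>
    let ⟨_, hI', hII'⟩ := hJ I hI
    escFeas_of_subset hII' (hJ' _ hI')

lemma zE_eq_sSup_th2 {J : Set (Finset (Fin n))}
    (hJ : ∀ x X, (x, X) ∈ th2 G → ∀ I ∈ J, escFeas G X I) :
    zE G J = sSup { r | ∃ x X, (x, X) ∈ th2 G ∧ r = ∑ i, x i } := by
  unfold zE
  congr 1
  ext r
  exact ⟨fun ⟨x, X, h, _, hr⟩ => ⟨x, X, h, hr⟩, fun ⟨x, X, h, hr⟩ => ⟨x, X, h, hJ x X h, hr⟩⟩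

end ExactSubgraphHierarchy

theorem stmt2_general {n : ℕ} (G : SimpleGraph (Fin n)) (a : ℝ)
    (ha : IsGreatest { r | ∃ s, IsStableVec G s ∧ r = ∑ i, s i } a) :
    sSup { r | ∃ x X, (x, X) ∈ th2 G ∧ r = ∑ i, x i } = zE G (Jk n 0) ∧
    zE G (Jk n 0) = zE G (Jk n 1) ∧
    (∀ k, 1 ≤ k → k ≤ n → zE G (Jk n k) ≤ zE G (Jk n (k - 1))) ∧
    zE G (Jk n n) = a := by
  have hzero : zE G (Jk n 0) = _ := zE_eq_sSup_th2 fun _ _ _ _ hI => escFeas_of_card_eq_zero hI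
  have hone : zE G (Jk n 1) = _ := zE_eq_sSup_th2 fun _ _ h _ hI => escFeas_of_card_eq_one h hI
  refine ⟨hzero.symm, hzero.trans hone.symm, fun k hk hkn => zE_le_zE_of_forall_exists_superset fun I hI => ?_, ?_⟩
  · obtain ⟨I', hII', hI'⟩ := Finset.exists_superset_card_eq (n := k) (s := I)
      (by rw [show I.card = k - 1 from hI]; omega) (by simpa using hkn)
    exact ⟨I', hI', hII'⟩
  obtain ⟨⟨s, hs, rfl⟩, hmax⟩ := ha
  have huniv : Finset.univ ∈ Jk n n := by simp [Jk]
  refine le_antisymm (zE_le fun x X h hJ => ?_)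
    (le_zE (vecMulVec_mem_th2 hs) fun I _ => escFeas_vecMulVec hs I)
  rw [← trace_eq_sum_of_mem_th2 h]
  exact trace_le_of_mem_stab2 (fun t ht => hmax ⟨t, ht, rfl⟩)
    (mem_stab2_of_escFeas_univ (hJ _ huniv))

/-- properties of the exact subgraph hierarchy:
`ϑ(G) = z^E_0(G) = z^E_1(G)`, the levels are monotone nonincreasing, and
`z^E_n(G) = α(G)`. -/
theorem stmt2 {n : ℕ} (hn : 1 ≤ n) (G : SimpleGraph (Fin n)) (a : ℝ)
    (ha : IsGreatest { r | ∃ s, IsStableVec G s ∧ r = ∑ i, s i } a) :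
    sSup { r | ∃ x X, (x, X) ∈ th2 G ∧ r = ∑ i, x i } = zE G (Jk n 0) ∧
    zE G (Jk n 0) = zE G (Jk n 1) ∧
    (∀ k, 1 ≤ k → k ≤ n → zE G (Jk n k) ≤ zE G (Jk n (k - 1))) ∧
    zE G (Jk n n) = a :=
  stmt2_general G a ha
end
end

section
/- Let G = (V,E) be a finite simple graph on V = {1,…,n}, let G⁰_n be the graph on vertex set {1,…,n} with no edges, and let X ∈ Sym_n(ℝ) satisfy X_{ij} = 0 for all {i,j} ∈ E. Then X ∈ STAB²(G) if and only if X ∈ STAB²(G⁰_n). -/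
open Matrix

noncomputable section

/-- if `X` is symmetric and vanishes on the edges of `G`, then
`X ∈ STAB²(G)` iff `X ∈ STAB²(G⁰_n)` for the edgeless graph `G⁰_n`. -/
theorem stmt3 {n : ℕ} (G : SimpleGraph (Fin n)) (X : Matrix (Fin n) (Fin n) ℝ)
    (hX : X.IsSymm) (hE : ∀ i j, G.Adj i j → X i j = 0) :
    X ∈ stab2 G ↔ X ∈ stab2 (⊥ : SimpleGraph (Fin n)) := by
  constructor
  · intro h
    refine convexHull_mono ?_ h
    rintro M ⟨s, ⟨hs01, _⟩, rfl⟩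
    exact ⟨s, ⟨hs01, fun i j hij => hij.elim⟩, rfl⟩
  · intro h
    rw [stab2, convexHull_eq] at h
    obtain ⟨ι, t, w, z, hw0, hw1, hz, hXc⟩ := h
    rw [← Finset.centerMass_filter_ne_zero] at hXc
    set t' := t.filter (fun i => w i ≠ 0) with ht'
    have hw1' : ∑ k ∈ t', w k = 1 := by
      rw [ht', Finset.sum_filter_ne_zero, hw1]
    have hXsum : X = ∑ k ∈ t', w k • z k := by
      rw [← hXc, Finset.centerMass, hw1', inv_one, one_smul]
    -- entries of z are nonneg
    have hznn : ∀ k ∈ t', ∀ i j, 0 ≤ z k i j := by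
      intro k hk i j
      obtain ⟨s, ⟨hs01, _⟩, hzk⟩ := hz k (Finset.filter_subset _ _ hk)
      rw [hzk, Matrix.vecMulVec_apply]
      have h1 : 0 ≤ s i := by rcases hs01 i with h|h <;> simp [h]
      have h2 : 0 ≤ s j := by rcases hs01 j with h|h <;> simp [h]
      exact mul_nonneg h1 h2
    have hentry : ∀ i j, X i j = ∑ k ∈ t', w k * z k i j := by
      intro i j
      rw [hXsum]
      simp [Matrix.sum_apply, Matrix.smul_apply, smul_eq_mul]
    rw [stab2, convexHull_eq]
    refine ⟨ι, t', w, z, fun k hk => hw0 k (Finset.filter_subset _ _ hk), hw1', ?_, hXc⟩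
    intro k hk
    obtain ⟨s, ⟨hs01, _⟩, hzk⟩ := hz k (Finset.filter_subset _ _ hk)
    refine ⟨s, ⟨hs01, ?_⟩, hzk⟩
    intro i j hij
    have hXij : X i j = 0 := hE i j hij
    rw [hentry i j] at hXij
    have hterm : ∀ l ∈ t', 0 ≤ w l * z l i j := fun l hl =>
      mul_nonneg (hw0 l (Finset.filter_subset _ _ hl)) (hznn l hl i j)
    have hzero : w k * z k i j = 0 :=
      (Finset.sum_eq_zero_iff_of_nonneg hterm).mp hXij k hk
    have hwk : w k ≠ 0 := (Finset.mem_filter.mp hk).2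
    have : z k i j = 0 := by
      rcases mul_eq_zero.mp hzero with h|h
      · exact absurd h hwk
      · exact h
    rw [hzk, Matrix.vecMulVec_apply] at this
    exact this
end
end

section
/- Let G = (V,E) be a finite simple graph on V = {1,…,n} and let X ∈ Sym_n(ℝ). Then X ∈ SSTAB²(G) if and only if X ∈ STAB²(G) and trace(X) ≤ 1. -/
open Matrix

noncomputable section

lemma trace_vecMulVec' {n : ℕ} (s : Fin n → ℝ) :
    (Matrix.vecMulVec s s).trace = ∑ k, s k * s k := by
  simp [Matrix.trace, Matrix.diag, Matrix.vecMulVec_apply]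

lemma stable_one_le_sum {n : ℕ} {G : SimpleGraph (Fin n)} {s : Fin n → ℝ}
    (hs : IsStableVec G s) (hne : s ≠ 0) : (1:ℝ) ≤ ∑ k, s k * s k := by
  obtain ⟨i, hi⟩ : ∃ i, s i ≠ 0 := by
    by_contra h; push_neg at h; exact hne (funext h)
  have h1 : s i = 1 := (hs.1 i).resolve_left hi
  calc (1:ℝ) = s i * s i := by rw [h1]; ring
  _ ≤ ∑ k, s k * s k := Finset.single_le_sum (f := fun k => s k * s k)
      (fun k _ => mul_self_nonneg _) (Finset.mem_univ i)

/-- `X ∈ SSTAB²(G)` iff `X ∈ STAB²(G)` and `trace(X) ≤ 1`. -/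
theorem stmt9 {n : ℕ} (G : SimpleGraph (Fin n)) (X : Matrix (Fin n) (Fin n) ℝ)
    (hX : X.IsSymm) :
    X ∈ sstab2 G ↔ X ∈ stab2 G ∧ X.trace ≤ 1 := by
  constructor
  · intro hmem
    constructor
    · refine convexHull_min ?_ (convex_convexHull ℝ _) hmem
      rintro M (⟨s, hs, hne, rfl⟩ | hM)
      · have h1 : (1:ℝ) ≤ ∑ k, s k * s k := stable_one_le_sum hs hne
        have hpos : (0:ℝ) < ∑ k, s k * s k := lt_of_lt_of_le one_pos h1
        have hgen : Matrix.vecMulVec s s ∈ stab2 G :=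
          subset_convexHull ℝ _ ⟨s, hs, rfl⟩
        have hzero : (0 : Matrix (Fin n) (Fin n) ℝ) ∈ stab2 G := by
          refine subset_convexHull ℝ _ ⟨0, ⟨fun i => Or.inl rfl, fun i j _ => by simp⟩, ?_⟩
          ext i j; simp [Matrix.vecMulVec_apply]
        have ha : (0:ℝ) ≤ (∑ k, s k * s k)⁻¹ := inv_nonneg.2 hpos.le
        have hb : (0:ℝ) ≤ 1 - (∑ k, s k * s k)⁻¹ := by
          have : (∑ k, s k * s k)⁻¹ ≤ 1 := inv_le_one_of_one_le₀ h1
          linarith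
        have := (convex_convexHull ℝ _) hgen hzero ha hb (by ring)
        simpa using this
      · simp only [Set.mem_singleton_iff] at hM
        subst hM
        exact subset_convexHull ℝ _ ⟨0, ⟨fun i => Or.inl rfl, fun i j _ => by simp⟩, by
          ext i j; simp [Matrix.vecMulVec_apply]⟩
    · have hconv : Convex ℝ {M : Matrix (Fin n) (Fin n) ℝ | M.trace ≤ 1} :=
        convex_halfSpace_le (𝕜 := ℝ)
          (f := fun M : Matrix (Fin n) (Fin n) ℝ => M.trace)
          ⟨fun a b => Matrix.trace_add a b, fun c a => Matrix.trace_smul c a⟩ 1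
      refine convexHull_min ?_ hconv hmem
      rintro M (⟨s, hs, hne, rfl⟩ | hM)
      · have h1 : (1:ℝ) ≤ ∑ k, s k * s k := stable_one_le_sum hs hne
        have hpos : (0:ℝ) < ∑ k, s k * s k := lt_of_lt_of_le one_pos h1
        simp only [Set.mem_setOf_eq, Matrix.trace_smul, trace_vecMulVec']
        simp [smul_eq_mul, inv_mul_cancel₀ hpos.ne']
      · simp only [Set.mem_singleton_iff] at hM
        subst hM; simp [Set.mem_setOf_eq]
  · rintro ⟨hmem, htr⟩
    rw [stab2, convexHull_eq] at hmem
    obtain ⟨ι, t, w, z, hw, hw1, hz, hx⟩ := hmem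
    rw [Finset.centerMass_eq_of_sum_1 _ _ hw1] at hx
    set B := ({ M | ∃ s, IsStableVec G s ∧ s ≠ 0 ∧
        M = (∑ k, s k * s k)⁻¹ • Matrix.vecMulVec s s } ∪ {(0 : Matrix (Fin n) (Fin n) ℝ)})
      with hB
    have h0B : (0 : Matrix (Fin n) (Fin n) ℝ) ∈ B := Or.inr rfl
    set Y : ι → Matrix (Fin n) (Fin n) ℝ := fun i => ((z i).trace)⁻¹ • z i with hY
    set u : ι → ℝ := fun i => w i * (z i).trace with hu
    have htrz : ∀ i ∈ t, (0:ℝ) ≤ (z i).trace := by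
      intro i hi
      obtain ⟨s, hs, hzi⟩ := hz i hi
      rw [hzi, trace_vecMulVec']
      exact Finset.sum_nonneg fun k _ => mul_self_nonneg _
    have hun : ∀ i ∈ t, 0 ≤ u i := fun i hi => mul_nonneg (hw i hi) (htrz i hi)
    have hYB : ∀ i ∈ t, Y i ∈ B := by
      intro i hi
      obtain ⟨s, hs, hzi⟩ := hz i hi
      by_cases hne : s = 0
      · subst hne
        have : z i = 0 := by rw [hzi]; ext a b; simp [Matrix.vecMulVec_apply]
        simp [hY, this, h0B]
      · exact Or.inl ⟨s, hs, hne, by rw [hY]; simp only; rw [hzi, trace_vecMulVec']⟩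
    have huY : ∀ i ∈ t, u i • Y i = w i • z i := by
      intro i hi
      by_cases hc : (z i).trace = 0
      · obtain ⟨s, hs, hzi⟩ := hz i hi
        have hz0 : z i = 0 := by
          have hsum : ∑ k, s k * s k = 0 := by rw [hzi, trace_vecMulVec'] at hc; exact hc
          have : ∀ k ∈ Finset.univ, s k * s k = 0 :=
            (Finset.sum_eq_zero_iff_of_nonneg (fun k _ => mul_self_nonneg _)).1 hsum
          rw [hzi]; ext a b
          have ha := mul_self_eq_zero.1 (this a (Finset.mem_univ a))
          simp [Matrix.vecMulVec_apply, ha]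
        simp [hY, hu, hz0]
      · rw [hY, hu]; simp only
        rw [smul_smul]
        congr 1
        field_simp
    have hT : ∑ i ∈ t, u i = X.trace := by
      rw [← hx, Matrix.trace_sum]
      exact Finset.sum_congr rfl fun i hi => by rw [hu, Matrix.trace_smul, smul_eq_mul]
    have hXsum : X = ∑ i ∈ t, u i • Y i := by
      rw [← hx]
      exact (Finset.sum_congr rfl huY).symm
    rcases eq_or_lt_of_le (Finset.sum_nonneg hun) with hT0 | hTpos
    · -- total weight zero : X = 0
      have : ∀ i ∈ t, u i = 0 :=
        (Finset.sum_eq_zero_iff_of_nonneg hun).1 hT0.symm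
      have hX0 : X = 0 := by
        rw [hXsum]
        refine Finset.sum_eq_zero fun i hi => by rw [this i hi, zero_smul]
      rw [sstab2, hX0]
      exact subset_convexHull ℝ _ h0B
    · have hC : t.centerMass u Y ∈ convexHull ℝ B :=
        Finset.centerMass_mem_convexHull t hun hTpos hYB
      have hCeq : t.centerMass u Y = (X.trace)⁻¹ • X := by
        rw [Finset.centerMass, hT, ← hXsum]
      have h0 : (0 : Matrix (Fin n) (Fin n) ℝ) ∈ convexHull ℝ B := subset_convexHull ℝ _ h0B
      have hTX : (0:ℝ) < X.trace := by rw [← hT]; exact hTpos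
      have hcomb := (convex_convexHull ℝ B) hC h0 hTX.le (by linarith : (0:ℝ) ≤ 1 - X.trace)
        (by ring)
      rw [hCeq, smul_zero, add_zero, smul_smul, mul_inv_cancel₀ hTX.ne', one_smul] at hcomb
      exact hcomb
end
end

section
/- Let G = (V,E) be a finite simple graph on V = {1,…,n} with n ≥ 1, and for 0 ≤ k ≤ n let z^S_k(G) = z^S_{J_k}(G) where J_k = { I ⊆ V : |I| = k }. Then ϑ(G) = z^S_0(G) = z^S_1(G), z^S_{k-1}(G) ≥ z^S_k(G) for all 1 ≤ k ≤ n, and z^S_n(G) = α(G), where ϑ(G) denotes the optimal value of the semidefinite program sup{ ⟨J_{n×n}, X⟩ : X ∈ CTH²(G) }. -/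
open Matrix

noncomputable section

/-!
Every stable set vector `s ≠ 0` gives the matrix `X = (sᵀs)⁻¹ s sᵀ`, which lies in `CTH²(G)`, has
all principal submatrices in the corresponding `SSTAB²`, and has `⟨J, X⟩ = 1ᵀs`; for a maximum
stable set this attains `α(G)`. Conversely `⟨J, ·⟩` is linear and equals `1ᵀs ≤ α(G)` on every
generator of `SSTAB²(G)`, so the constraint for `I = V` caps the value at `α(G)`. Principal
submatrices of points of `SSTAB²` lie in the smaller `SSTAB²`, because restricting a stable set
vector only decreases `sᵀs`; hence constraints for `I` imply those for subsets of `I`, which gives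
the monotonicity. For `|I| ≤ 1` the constraint only asks `0 ≤ trace X_I ≤ 1`, which every
`X ∈ CTH²(G)` satisfies, so the first two levels are the Lovász theta function.
-/

open Finset

lemma sum_comp_le_sum_of_injective {A B : Type*} [Fintype A] [Fintype B] {f : A → B}
    (hf : Function.Injective f) {g : B → ℝ} (hg : ∀ b, 0 ≤ g b) :
    ∑ a, g (f a) ≤ ∑ b, g b := by
  classical
  rw [← Finset.sum_image fun x _ y _ h => hf h]
  exact Finset.sum_le_univ_sum_of_nonneg hg

lemma sum_mul_self_pos {W : Type*} [Fintype W] {t : W → ℝ} (ht : t ≠ 0) :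
    0 < ∑ k, t k * t k :=
  lt_of_le_of_ne (Finset.sum_nonneg fun k _ => mul_self_nonneg (t k))
    (Ne.symm (mt dotProduct_self_eq_zero.1 ht))

lemma sum_sum_smul_vecMulVec {W : Type*} [Fintype W] (c : ℝ) (t : W → ℝ) :
    ∑ i, ∑ j, (c • vecMulVec t t) i j = c * (∑ i, t i) ^ 2 := by
  simp only [Matrix.smul_apply, vecMulVec_apply, smul_eq_mul, ← Finset.mul_sum, sq,
    Finset.sum_mul_sum]

lemma Matrix.PosSemidef.apply_add_apply_le {W : Type*} [Fintype W] [DecidableEq W]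
    {M : Matrix W W ℝ} (hM : M.PosSemidef) (i j : W) : M i j + M j i ≤ M i i + M j j := by
  have := hM.dotProduct_mulVec_nonneg (Pi.single i 1 - Pi.single j 1)
  simp only [star_trivial, dotProduct_sub, sub_dotProduct, mulVec_sub, mulVec_single,
    single_dotProduct, MulOpposite.op_one, one_smul, one_mul, col_apply] at this
  linarith

lemma Matrix.PosSemidef.sum_sum_le {W : Type*} [Fintype W] {M : Matrix W W ℝ}
    (hM : M.PosSemidef) : ∑ i, ∑ j, M i j ≤ Fintype.card W * M.trace := by
  classical
  have h := Finset.sum_le_sum fun i (_ : i ∈ univ) =>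
    Finset.sum_le_sum fun j (_ : j ∈ univ) => hM.apply_add_apply_le i j
  simp only [Finset.sum_add_distrib, Finset.sum_const, card_univ, nsmul_eq_mul] at h
  rw [Finset.sum_comm (f := fun i j => M j i), ← Finset.mul_sum] at h
  simp only [trace, diag_apply]
  linarith

section StableVec

variable {V W : Type*} {G : SimpleGraph V} {s : V → ℝ}

lemma isStableVec_zero : IsStableVec G 0 :=
  ⟨fun _ => Or.inl rfl, fun _ _ _ => zero_mul 0⟩

lemma isStableVec_single [DecidableEq V] (v : V) : IsStableVec G (Pi.single v 1) := by
  refine ⟨fun i => ?_, fun i j hij => ?_⟩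
  · by_cases h : i = v <;> simp [h]
  · by_cases h : i = v
    · subst h
      simp [hij.ne.symm]
    · simp [h]

lemma IsStableVec.comp_s11 {H : SimpleGraph W} (hs : IsStableVec G s) (f : H →g G) :
    IsStableVec H (s ∘ f) :=
  ⟨fun p => hs.1 (f p), fun p q hpq => hs.2 (f p) (f q) (f.map_rel hpq)⟩

lemma IsStableVec.sum_mul_self [Fintype V] (hs : IsStableVec G s) :
    ∑ i, s i * s i = ∑ i, s i :=
  Finset.sum_congr rfl fun i _ => by rcases hs.1 i with h | h <;> simp [h]

lemma IsStableVec.sum_sum_inv_smul_vecMulVec [Fintype V] (hs : IsStableVec G s) :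
    ∑ i, ∑ j, ((∑ k, s k * s k)⁻¹ • vecMulVec s s) i j = ∑ i, s i := by
  rw [sum_sum_smul_vecMulVec, hs.sum_mul_self]
  rcases eq_or_ne (∑ i, s i) 0 with h | h
  · simp [h]
  · rw [sq, inv_mul_cancel_left₀ h]

end StableVec

section SSTAB

variable {W : Type*} [Fintype W] {H : SimpleGraph W} {t : W → ℝ}

lemma zero_mem_sstab2 : (0 : Matrix W W ℝ) ∈ sstab2 H :=
  subset_convexHull ℝ _ (Set.mem_union_right _ rfl)

lemma inv_smul_vecMulVec_mem_sstab2 (ht : IsStableVec H t) :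
    (∑ k, t k * t k)⁻¹ • vecMulVec t t ∈ sstab2 H := by
  by_cases h0 : t = 0
  · subst h0
    simpa using zero_mem_sstab2
  · exact subset_convexHull ℝ _ (Set.mem_union_left _ ⟨t, ht, h0, rfl⟩)

lemma smul_vecMulVec_mem_sstab2 (ht : IsStableVec H t) {c : ℝ} (hc : 0 ≤ c)
    (hc1 : c * ∑ k, t k * t k ≤ 1) : c • vecMulVec t t ∈ sstab2 H := by
  by_cases h0 : t = 0
  · subst h0
    simpa using zero_mem_sstab2
  have hd := sum_mul_self_pos h0
  have := (convex_convexHull ℝ _).smul_mem_of_zero_mem zero_mem_sstab2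
    (inv_smul_vecMulVec_mem_sstab2 ht) ⟨mul_nonneg hc hd.le, hc1⟩
  rwa [smul_smul, mul_assoc, mul_inv_cancel₀ hd.ne', mul_one] at this

lemma mem_sstab2_of_subsingleton [Subsingleton W] {M : Matrix W W ℝ} (h0 : 0 ≤ M.trace)
    (h1 : M.trace ≤ 1) : M ∈ sstab2 H := by
  have hM : M = M.trace • vecMulVec (fun _ => 1) (fun _ => 1) := by
    ext i j
    obtain rfl := Subsingleton.elim i j
    simp [trace, vecMulVec_apply, Fintype.sum_subsingleton _ i]
  have hstable : IsStableVec H fun _ => 1 :=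
    ⟨fun _ => Or.inr rfl, fun i j hij => absurd (Subsingleton.elim i j) hij.ne⟩
  rw [hM]
  refine smul_vecMulVec_mem_sstab2 hstable h0 ?_
  have hcard : (Fintype.card W : ℝ) ≤ 1 := by
    exact_mod_cast Fintype.card_le_one_iff_subsingleton.2 inferInstance
  simp only [mul_one, Finset.sum_const, card_univ, nsmul_eq_mul]
  nlinarith

lemma submatrix_mem_sstab2 {W' : Type*} [Fintype W'] {H' : SimpleGraph W'} (f : H' ↪g H)
    {M : Matrix W W ℝ} (hM : M ∈ sstab2 H) : M.submatrix f f ∈ sstab2 H' := by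
  let restrict : Matrix W W ℝ →ₗ[ℝ] Matrix W' W' ℝ :=
    { toFun := fun M => M.submatrix f f
      map_add' := fun _ _ => rfl
      map_smul' := fun _ _ => rfl }
  refine convexHull_min ?_ ((convex_convexHull ℝ _).linear_preimage restrict) hM
  rintro _ (⟨t, ht, ht0, rfl⟩ | rfl)
  · show ((∑ k, t k * t k)⁻¹ • vecMulVec t t).submatrix f f ∈ sstab2 H'
    have hd := sum_mul_self_pos ht0
    have hle : ∑ p, t (f p) * t (f p) ≤ ∑ k, t k * t k :=
      sum_comp_le_sum_of_injective f.injective fun k => mul_self_nonneg (t k)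
    refine smul_vecMulVec_mem_sstab2 (ht.comp_s11 f.toHom) (inv_nonneg.2 hd.le) ?_
    calc (∑ k, t k * t k)⁻¹ * ∑ p, t (f p) * t (f p)
        ≤ (∑ k, t k * t k)⁻¹ * ∑ k, t k * t k := by gcongr
      _ = 1 := inv_mul_cancel₀ hd.ne'
  · exact zero_mem_sstab2

lemma sum_sum_le_of_mem_sstab2 {a : ℝ} (hα : ∀ s, IsStableVec H s → ∑ i, s i ≤ a)
    {M : Matrix W W ℝ} (hM : M ∈ sstab2 H) : ∑ i, ∑ j, M i j ≤ a := by
  have hlin : IsLinearMap ℝ fun M : Matrix W W ℝ => ∑ i, ∑ j, M i j :=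
    ⟨fun M N => by simp [Finset.sum_add_distrib], fun c M => by simp [Finset.mul_sum]⟩
  refine convexHull_min ?_ (convex_halfSpace_le hlin a) hM
  rintro _ (⟨t, ht, -, rfl⟩ | rfl)
  · exact ht.sum_sum_inv_smul_vecMulVec.trans_le (hα t ht)
  · simpa using hα 0 isStableVec_zero

end SSTAB

section Hierarchy

variable {n : ℕ} {G : SimpleGraph (Fin n)} {X : Matrix (Fin n) (Fin n) ℝ}

lemma sescFeas_of_mem_sstab2 (hX : X ∈ sstab2 G) (I : Finset (Fin n)) : sescFeas G X I :=
  submatrix_mem_sstab2 (SimpleGraph.Embedding.induce _) hX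

lemma sescFeas.mono {I I' : Finset (Fin n)} (h : sescFeas G X I) (hI : I' ⊆ I) :
    sescFeas G X I' :=
  submatrix_mem_sstab2 (G.induceHomOfLE (Finset.coe_subset.2 hI)) h

-- `(subMat X univ).submatrix e e` is `X` by definition.
lemma mem_sstab2_of_sescFeas_univ (h : sescFeas G X univ) : X ∈ sstab2 G := by
  let e : G ↪g G.induce ((univ : Finset (Fin n)) : Set (Fin n)) :=
    ⟨⟨fun i => ⟨i, Finset.mem_coe.2 (mem_univ i)⟩, fun _ _ h => congrArg Subtype.val h⟩,
      Iff.rfl⟩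
  exact submatrix_mem_sstab2 e h

lemma sescFeas_of_card_le_one (hX : X ∈ cth2 G) {I : Finset (Fin n)} (hI : I.card ≤ 1) :
    sescFeas G X I := by
  have := Finset.card_le_one_iff_subsingleton_coe.1 hI
  refine mem_sstab2_of_subsingleton (hX.2.2.2.submatrix _).trace_nonneg ?_
  calc (subMat X I).trace = ∑ p : (I : Set (Fin n)), X p p := rfl
    _ ≤ ∑ i, X i i := sum_comp_le_sum_of_injective (g := fun i => X i i) Subtype.val_injective
        fun i => hX.2.2.2.diag_nonneg
    _ = 1 := hX.2.1

lemma sum_sum_le_of_mem_cth2 (hX : X ∈ cth2 G) : ∑ i, ∑ j, X i j ≤ n := by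
  simpa [hX.2.1] using hX.2.2.2.sum_sum_le

lemma inv_smul_vecMulVec_mem_cth2 {s : Fin n → ℝ} (hs : IsStableVec G s) (hs0 : s ≠ 0) :
    (∑ k, s k * s k)⁻¹ • vecMulVec s s ∈ cth2 G := by
  refine ⟨?_, ?_, fun i j hij => ?_, ?_⟩
  · rw [IsSymm, transpose_smul, transpose_vecMulVec]
  · rw [trace_smul, trace_vecMulVec, smul_eq_mul]
    exact inv_mul_cancel₀ (sum_mul_self_pos hs0).ne'
  · simp [vecMulVec_apply, hs.2 i j hij]
  · simpa using (posSemidef_vecMulVec_self_star s).smul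
      (inv_nonneg.2 (Finset.sum_nonneg fun k _ => mul_self_nonneg (s k)))

lemma zS_eq_sSup_cth2 {J : Set (Finset (Fin n))} (hJ : ∀ I ∈ J, I.card ≤ 1) :
    zS G J = sSup { r | ∃ X, X ∈ cth2 G ∧ r = ∑ i, ∑ j, X i j } := by
  refine congrArg sSup (Set.ext fun r => ⟨?_, ?_⟩)
  · rintro ⟨X, hX, -, rfl⟩
    exact ⟨X, hX, rfl⟩
  · rintro ⟨X, hX, rfl⟩
    exact ⟨X, hX, fun I hI => sescFeas_of_card_le_one hX (hJ I hI), rfl⟩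

lemma zS_le_zS_of_forall_exists_superset {J J' : Set (Finset (Fin n))}
    (hfeas : ∃ X ∈ cth2 G, ∀ I ∈ J, sescFeas G X I) (hJ : ∀ I' ∈ J', ∃ I ∈ J, I' ⊆ I) :
    zS G J ≤ zS G J' := by
  obtain ⟨X, hX, hXJ⟩ := hfeas
  refine csSup_le_csSup ⟨n, ?_⟩ ⟨_, X, hX, hXJ, rfl⟩ ?_
  · rintro _ ⟨Y, hY, -, rfl⟩
    exact sum_sum_le_of_mem_cth2 hY
  · rintro _ ⟨Y, hY, hYJ, rfl⟩
    refine ⟨Y, hY, fun I' hI' => ?_, rfl⟩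
    obtain ⟨I, hI, hsub⟩ := hJ I' hI'
    exact (hYJ I hI).mono hsub

end Hierarchy

/-- properties of the scaled exact subgraph hierarchy:
`ϑ(G) = z^S_0(G) = z^S_1(G)`, the levels are monotone nonincreasing, and
`z^S_n(G) = α(G)`. -/
theorem stmt11 {n : ℕ} (hn : 1 ≤ n) (G : SimpleGraph (Fin n)) (a : ℝ)
    (ha : IsGreatest { r | ∃ s, IsStableVec G s ∧ r = ∑ i, s i } a) :
    sSup { r | ∃ X, X ∈ cth2 G ∧ r = ∑ i, ∑ j, X i j } = zS G (Jk n 0) ∧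
    zS G (Jk n 0) = zS G (Jk n 1) ∧
    (∀ k, 1 ≤ k → k ≤ n → zS G (Jk n k) ≤ zS G (Jk n (k - 1))) ∧
    zS G (Jk n n) = a := by
  obtain ⟨⟨s, hs, rfl⟩, hα⟩ := ha
  have hs0 : s ≠ 0 := by
    rintro rfl
    have := hα ⟨_, isStableVec_single ⟨0, hn⟩, rfl⟩
    norm_num at this
  set X := (∑ k, s k * s k)⁻¹ • vecMulVec s s
  have hX : X ∈ cth2 G := inv_smul_vecMulVec_mem_cth2 hs hs0
  have hXsesc : ∀ I, sescFeas G X I := sescFeas_of_mem_sstab2 (inv_smul_vecMulVec_mem_sstab2 hs)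
  have hθ₀ : zS G (Jk n 0) = _ :=
    zS_eq_sSup_cth2 fun I (hI : I.card = 0) => hI.trans_le zero_le_one
  have hθ₁ : zS G (Jk n 1) = _ := zS_eq_sSup_cth2 fun I (hI : I.card = 1) => hI.le
  refine ⟨hθ₀.symm, hθ₀.trans hθ₁.symm, fun k _ hkn => ?_, ?_⟩
  · refine zS_le_zS_of_forall_exists_superset ⟨X, hX, fun I _ => hXsesc I⟩ fun I' hI' => ?_
    obtain ⟨I, hsub, hI⟩ := Finset.exists_superset_card_eq
      ((hI' : I'.card = k - 1).trans_le (Nat.sub_le k 1)) (by simpa using hkn)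
    exact ⟨I, hI, hsub⟩
  · refine IsGreatest.csSup_eq
      ⟨⟨X, hX, fun I _ => hXsesc I, hs.sum_sum_inv_smul_vecMulVec.symm⟩, ?_⟩
    rintro _ ⟨Y, -, hY, rfl⟩
    exact sum_sum_le_of_mem_sstab2 (fun t ht => hα ⟨t, ht, rfl⟩)
      (mem_sstab2_of_sescFeas_univ (hY univ (by simp [Jk])))
end
end

section
/- Let X be a symmetric real 2×2 matrix. Then X ∈ STAB²(G⁰_2), where G⁰_2 is the edgeless graph on two vertices, if and only if the four inequalities 0 ≤ X_{12}, X_{12} ≤ X_{11}, X_{12} ≤ X_{22}, and X_{11} + X_{22} ≤ 1 + X_{12} hold. -/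
open Matrix

noncomputable section

/-- a symmetric `2×2` matrix lies in `STAB²(G⁰_2)` iff the four
inequalities (9a)–(9d) hold. -/
theorem stmt15 (X : Matrix (Fin 2) (Fin 2) ℝ) (hX : X.IsSymm) :
    X ∈ stab2 (⊥ : SimpleGraph (Fin 2)) ↔
      0 ≤ X 0 1 ∧ X 0 1 ≤ X 0 0 ∧ X 0 1 ≤ X 1 1 ∧ X 0 0 + X 1 1 ≤ 1 + X 0 1 := by
  constructor
  · intro hmem
    set K : Set (Matrix (Fin 2) (Fin 2) ℝ) :=
      {M | 0 ≤ M 0 1 ∧ M 0 1 ≤ M 0 0 ∧ M 0 1 ≤ M 1 1 ∧ M 0 0 + M 1 1 ≤ 1 + M 0 1} with hK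
    have hconv : Convex ℝ K := by
      rintro A ⟨hA1, hA2, hA3, hA4⟩ B ⟨hB1, hB2, hB3, hB4⟩ a b ha hb hab
      simp only [hK, Set.mem_setOf_eq, Matrix.add_apply, Matrix.smul_apply, smul_eq_mul]
      refine ⟨by nlinarith, by nlinarith, by nlinarith, by nlinarith⟩
    have hsub : { M | ∃ s, IsStableVec (⊥ : SimpleGraph (Fin 2)) s ∧
        M = Matrix.vecMulVec s s } ⊆ K := by
      rintro M ⟨s, ⟨hs01, -⟩, rfl⟩
      simp only [hK, Set.mem_setOf_eq, Matrix.vecMulVec_apply]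
      rcases hs01 0 with h0 | h0 <;> rcases hs01 1 with h1 | h1 <;>
        rw [h0, h1] <;> norm_num
    exact convexHull_min hsub hconv hmem
  · rintro ⟨h1, h2, h3, h4⟩
    have hsym : X 1 0 = X 0 1 := hX.apply 0 1
    set w : Fin 4 → ℝ := ![X 0 1, X 0 0 - X 0 1, X 1 1 - X 0 1,
      1 + X 0 1 - X 0 0 - X 1 1] with hw
    set z : Fin 4 → Matrix (Fin 2) (Fin 2) ℝ :=
      ![Matrix.vecMulVec ![1, 1] ![1, 1], Matrix.vecMulVec ![1, 0] ![1, 0],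
        Matrix.vecMulVec ![0, 1] ![0, 1], Matrix.vecMulVec ![0, 0] ![0, 0]] with hz
    have hwnn : ∀ i ∈ Finset.univ, 0 ≤ w i := by
      intro i _
      fin_cases i <;> simp [hw] <;> linarith
    have hwsum : ∑ i ∈ Finset.univ, w i = 1 := by
      simp [hw, Fin.sum_univ_four]; ring
    have hzmem : ∀ i ∈ Finset.univ, z i ∈ { M | ∃ s,
        IsStableVec (⊥ : SimpleGraph (Fin 2)) s ∧ M = Matrix.vecMulVec s s } := by
      intro i _
      fin_cases i
      · exact ⟨![1, 1], ⟨fun j => by fin_cases j <;> simp, fun i j h => h.elim⟩, rfl⟩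
      · exact ⟨![1, 0], ⟨fun j => by fin_cases j <;> simp, fun i j h => h.elim⟩, rfl⟩
      · exact ⟨![0, 1], ⟨fun j => by fin_cases j <;> simp, fun i j h => h.elim⟩, rfl⟩
      · exact ⟨![0, 0], ⟨fun j => by fin_cases j <;> simp, fun i j h => h.elim⟩, rfl⟩
    have := Finset.centerMass_mem_convexHull Finset.univ hwnn (by rw [hwsum]; norm_num) hzmem
    have hcm : Finset.univ.centerMass w z = X := by
      rw [Finset.centerMass, hwsum, inv_one, one_smul]
      ext i j
      simp only [Fin.sum_univ_four, hw, hz]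
      fin_cases i <;> fin_cases j <;>
        simp [Matrix.vecMulVec_apply, Matrix.add_apply, Matrix.smul_apply, hsym]
    rw [hcm] at this
    exact this
end
end

section
/- Let X be a symmetric real 3×3 matrix. Then X ∈ STAB²(G⁰_3), where G⁰_3 is the edgeless graph on three vertices, if and only if the following 16 inequalities hold: for each of the three pairs {i,j} ⊆ {1,2,3}: 0 ≤ X_{ij}, X_{ij} ≤ X_{ii}, X_{ij} ≤ X_{jj}, and X_{ii} + X_{jj} ≤ 1 + X_{ij}; and in addition, with {i,j,ℓ} = {1,2,3}: X_{ij} + X_{iℓ} ≤ X_{ii} + X_{jℓ}, X_{ij} + X_{jℓ} ≤ X_{jj} + X_{iℓ}, X_{iℓ} + X_{jℓ} ≤ X_{ℓℓ} + X_{ij}, and X_{ii} + X_{jj} + X_{ℓℓ} ≤ 1 + X_{ij} + X_{iℓ} + X_{jℓ}. -/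
open Matrix

noncomputable section

set_option maxHeartbeats 1000000 in
/-- a symmetric `3×3` matrix lies in `STAB²(G⁰_3)` iff the sixteen
facet inequalities hold. -/
theorem stmt16 (X : Matrix (Fin 3) (Fin 3) ℝ) (hX : X.IsSymm) :
    X ∈ stab2 (⊥ : SimpleGraph (Fin 3)) ↔
      ((∀ i j : Fin 3, i ≠ j →
          0 ≤ X i j ∧ X i j ≤ X i i ∧ X i j ≤ X j j ∧ X i i + X j j ≤ 1 + X i j) ∧
       (∀ i j l : Fin 3, i ≠ j → i ≠ l → j ≠ l →
          X i j + X i l ≤ X i i + X j l) ∧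
       X 0 0 + X 1 1 + X 2 2 ≤ 1 + X 0 1 + X 0 2 + X 1 2) := by

  have hsym : ∀ i j : Fin 3, X j i = X i j := fun i j => hX.apply i j
  constructor
  · intro hmem
    refine convexHull_min (t := {M : Matrix (Fin 3) (Fin 3) ℝ |
        (∀ i j : Fin 3, i ≠ j →
          0 ≤ M i j ∧ M i j ≤ M i i ∧ M i j ≤ M j j ∧ M i i + M j j ≤ 1 + M i j) ∧
        (∀ i j l : Fin 3, i ≠ j → i ≠ l → j ≠ l → M i j + M i l ≤ M i i + M j l) ∧
        M 0 0 + M 1 1 + M 2 2 ≤ 1 + M 0 1 + M 0 2 + M 1 2}) ?_ ?_ hmem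
    · rintro M ⟨s, ⟨hs01, -⟩, rfl⟩
      refine ⟨fun i j hij => ?_, fun i j l hij hil hjl => ?_, ?_⟩
      · rcases hs01 i with h | h <;> rcases hs01 j with h' | h' <;>
          simp [Matrix.vecMulVec_apply, h, h']
      · rcases hs01 i with h | h <;> rcases hs01 j with h' | h' <;>
          rcases hs01 l with h'' | h'' <;>
          simp [Matrix.vecMulVec_apply, h, h', h'']
      · rcases hs01 0 with h | h <;> rcases hs01 1 with h' | h' <;>
          rcases hs01 2 with h'' | h'' <;>
          simp [Matrix.vecMulVec_apply, h, h', h'']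
    · rintro M hM N hN aa bb ha hb hab
      obtain ⟨hM1, hM2, hM3⟩ := hM
      obtain ⟨hN1, hN2, hN3⟩ := hN
      refine ⟨fun i j hij => ?_, fun i j l hij hil hjl => ?_, ?_⟩
      · obtain ⟨p1, p2, p3, p4⟩ := hM1 i j hij
        obtain ⟨q1, q2, q3, q4⟩ := hN1 i j hij
        refine ⟨?_, ?_, ?_, ?_⟩ <;>
          simp only [Matrix.add_apply, Matrix.smul_apply, smul_eq_mul] <;>
          nlinarith [mul_nonneg ha p1, mul_nonneg hb q1,
            mul_le_mul_of_nonneg_left p2 ha, mul_le_mul_of_nonneg_left q2 hb,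
            mul_le_mul_of_nonneg_left p3 ha, mul_le_mul_of_nonneg_left q3 hb,
            mul_le_mul_of_nonneg_left p4 ha, mul_le_mul_of_nonneg_left q4 hb]
      · have p := hM2 i j l hij hil hjl
        have q := hN2 i j l hij hil hjl
        simp only [Matrix.add_apply, Matrix.smul_apply, smul_eq_mul]
        nlinarith [mul_le_mul_of_nonneg_left p ha, mul_le_mul_of_nonneg_left q hb]
      · simp only [Matrix.add_apply, Matrix.smul_apply, smul_eq_mul]
        nlinarith [mul_le_mul_of_nonneg_left hM3 ha, mul_le_mul_of_nonneg_left hN3 hb]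
  · rintro ⟨h1, h2, h3⟩
    obtain ⟨d0, dA, dB, dU⟩ := h1 0 1 (by decide)
    obtain ⟨e0, eA, eC, eU⟩ := h1 0 2 (by decide)
    obtain ⟨f0, fB, fC, fU⟩ := h1 1 2 (by decide)
    have tri1 : X 0 1 + X 0 2 ≤ X 0 0 + X 1 2 := h2 0 1 2 (by decide) (by decide) (by decide)
    have tri2 : X 1 0 + X 1 2 ≤ X 1 1 + X 0 2 := h2 1 0 2 (by decide) (by decide) (by decide)
    have tri3 : X 2 0 + X 2 1 ≤ X 2 2 + X 0 1 := h2 2 0 1 (by decide) (by decide) (by decide)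
    have h10 : X 1 0 = X 0 1 := hsym 0 1
    have h20 : X 2 0 = X 0 2 := hsym 0 2
    have h21 : X 2 1 = X 1 2 := hsym 1 2
    set a := X 0 0 with ha'
    set b := X 1 1 with hb'
    set c := X 2 2 with hc'
    set d := X 0 1 with hd'
    set e := X 0 2 with he'
    set f := X 1 2 with hf'
    rw [h10] at tri2
    rw [h20, h21] at tri3
    set t : ℝ := max (max 0 (d + e - a)) (max (d + f - b) (e + f - c)) with ht'
    have ht0 : 0 ≤ t := le_trans (le_max_left 0 _) (le_max_left _ _)
    have htA : d + e - a ≤ t := le_trans (le_max_right 0 _) (le_max_left _ _)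
    have htB : d + f - b ≤ t := le_trans (le_max_left _ _) (le_max_right _ _)
    have htC : e + f - c ≤ t := le_trans (le_max_right _ _) (le_max_right _ _)
    have htd : t ≤ d := max_le (max_le d0 (by linarith)) (max_le (by linarith) (by linarith))
    have hte : t ≤ e := max_le (max_le e0 (by linarith)) (max_le (by linarith) (by linarith))
    have htf : t ≤ f := max_le (max_le f0 (by linarith)) (max_le (by linarith) (by linarith))
    have htz : t ≤ 1 - a - b - c + d + e + f :=
      max_le (max_le (by linarith) (by linarith)) (max_le (by linarith) (by linarith))
    set w : Fin 8 → ℝ := ![1 - a - b - c + d + e + f - t, a - d - e + t, b - d - f + t,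
      c - e - f + t, d - t, e - t, f - t, t] with hw'
    set v : Fin 8 → (Fin 3 → ℝ) := ![![0,0,0], ![1,0,0], ![0,1,0], ![0,0,1],
      ![1,1,0], ![1,0,1], ![0,1,1], ![1,1,1]] with hv'
    have key : ∑ i : Fin 8, w i • Matrix.vecMulVec (v i) (v i) ∈
        stab2 (⊥ : SimpleGraph (Fin 3)) := by
      refine Convex.sum_mem (convex_convexHull ℝ _) (fun i _ => ?_) ?_ (fun i _ => ?_)
      · fin_cases i <;> norm_num [hw', Matrix.cons_val_succ] <;> linarith
      · simp only [hw', Fin.sum_univ_succ, Fin.sum_univ_zero, Matrix.cons_val_zero,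
          Matrix.cons_val_succ]
        ring
      · refine subset_convexHull ℝ _ ⟨v i, ⟨fun k => ?_, fun k l h => by simp at h⟩, rfl⟩
        fin_cases i <;> fin_cases k <;> norm_num [hv']
    have hXeq : X = ∑ i : Fin 8, w i • Matrix.vecMulVec (v i) (v i) := by
      ext i j
      rw [Matrix.sum_apply]
      fin_cases i <;> fin_cases j <;>
        simp only [Fin.sum_univ_succ, Fin.sum_univ_zero, hw', hv', Matrix.vecMulVec_apply,
          Matrix.smul_apply, smul_eq_mul, Matrix.cons_val_zero, Matrix.cons_val_one,
          Matrix.cons_val_succ, Matrix.head_cons, Matrix.cons_val_fin_one, Fin.mk_zero,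
          Fin.mk_one, add_zero, mul_zero, zero_mul, mul_one, one_mul] <;>
        (try norm_num [Matrix.cons_val_succ])
      all_goals try ring1
      all_goals try ring_nf
      all_goals first
        | exact h10
        | exact h20
        | exact h21
        | exact hc'.symm
        | exact hd'.symm
        | exact he'.symm
        | exact hf'.symm
    rw [hXeq]
    exact key
end
end
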